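/- In the full mean-field toy model with 2 plants and 3 pollinators, the candidate feasible equilibrium abundances are $s_1^*=s_2^*=p_1/q$, $s_3^*=s_5^*=p_2/q$, $s_4^*=p_3/q$ with $p_1=25+5\beta_0-2\beta_0^2+10\gamma_0-2\beta_0\gamma_0$, $p_2=25-\beta_0^2+5\gamma_0-2\beta_0\gamma_0-\gamma_0^2$, $p_3=25-\beta_0^2+10\gamma_0+\gamma_0^2$, $q=125+50\beta_0-5\beta_0^2-2\beta_0^3-15\gamma_0^2+2\beta_0\gamma_0^2$; i.e., these values satisfy the equilibrium equations whenever $q\neq 0$. -/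

import Mathlib

/-!
Both the interaction matrix and the candidate point are invariant under swapping plant 1 with
plant 2 together with pollinator 3 with pollinator 5. On points with `s₁ = s₂ = x`,
`s₃ = s₅ = y`, `s₄ = z` the five equilibrium equations collapse to a `3 × 3` linear system in
`(x, y, z)`, whose determinant is `q` and whose Cramer numerators are `p₁, p₂, p₃`.
-/

theorem equilibrium_of_symmetric (β0 γ0 x y z : ℝ)
    (hplant : 1 - (5 + β0) * x + γ0 * (y + z) = 0)
    (hside : 1 - (5 + β0) * y - β0 * z + γ0 * x = 0)
    (hhub : 1 - 5 * z - 2 * β0 * y + 2 * γ0 * x = 0) :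
    1 - 5*x - β0*x + γ0*(y + z) = 0 ∧
    1 - 5*x - β0*x + γ0*(z + y) = 0 ∧
    1 - 5*y - β0*(z + y) + γ0*x = 0 ∧
    1 - 5*z - β0*(y + y) + γ0*(x + x) = 0 ∧
    1 - 5*y - β0*(y + z) + γ0*x = 0 := by
  refine ⟨?_, ?_, ?_, ?_, ?_⟩ <;> linarith

theorem symmetric_system_cramer (β0 γ0 p1 p2 p3 q : ℝ)
    (hp1 : p1 = 25 + 5*β0 - 2*β0^2 + 10*γ0 - 2*β0*γ0)
    (hp2 : p2 = 25 - β0^2 + 5*γ0 - 2*β0*γ0 - γ0^2)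
    (hp3 : p3 = 25 - β0^2 + 10*γ0 + γ0^2)
    (hq : q = 125 + 50*β0 - 5*β0^2 - 2*β0^3 - 15*γ0^2 + 2*β0*γ0^2) :
    q - (5 + β0) * p1 + γ0 * (p2 + p3) = 0 ∧
    q - (5 + β0) * p2 - β0 * p3 + γ0 * p1 = 0 ∧
    q - 5 * p3 - 2 * β0 * p2 + 2 * γ0 * p1 = 0 := by
  subst hp1 hp2 hp3 hq
  refine ⟨?_, ?_, ?_⟩ <;> ring

/-- Full mean-field toy model (plants 1,2; pollinators 3,4,5; edges
(1,3),(1,4),(2,4),(2,5); α = 1, β = 5, h = 0): the explicit rational values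
`p₁/q, p₂/q, p₃/q` form an equilibrium of the Lotka–Volterra dynamics whenever
`q ≠ 0`. -/
theorem fullMeanField_toy_equilibrium (β0 γ0 : ℝ)
    (p1 p2 p3 q s1 s2 s3 s4 s5 : ℝ)
    (hp1 : p1 = 25 + 5*β0 - 2*β0^2 + 10*γ0 - 2*β0*γ0)
    (hp2 : p2 = 25 - β0^2 + 5*γ0 - 2*β0*γ0 - γ0^2)
    (hp3 : p3 = 25 - β0^2 + 10*γ0 + γ0^2)
    (hq : q = 125 + 50*β0 - 5*β0^2 - 2*β0^3 - 15*γ0^2 + 2*β0*γ0^2)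
    (hq0 : q ≠ 0)
    (hs1 : s1 = p1 / q) (hs2 : s2 = p1 / q)
    (hs3 : s3 = p2 / q) (hs5 : s5 = p2 / q) (hs4 : s4 = p3 / q) :
    1 - 5*s1 - β0*s2 + γ0*(s3 + s4) = 0 ∧
    1 - 5*s2 - β0*s1 + γ0*(s4 + s5) = 0 ∧
    1 - 5*s3 - β0*(s4 + s5) + γ0*s1 = 0 ∧
    1 - 5*s4 - β0*(s3 + s5) + γ0*(s1 + s2) = 0 ∧
    1 - 5*s5 - β0*(s3 + s4) + γ0*s2 = 0 := by
  obtain ⟨hplant, hside, hhub⟩ := symmetric_system_cramer β0 γ0 p1 p2 p3 q hp1 hp2 hp3 hq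
  subst hs1 hs2 hs3 hs4 hs5
  apply equilibrium_of_symmetric
  · field_simp
    linear_combination hplant
  · field_simp
    linear_combination hside
  · field_simp
    linear_combination hhub
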